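/- arXiv:1304.3626 — 4 statements merged into one kernel-verified Lean document; each statement's English description precedes it below -/
import Mathlib

section
/- Let β < 1, c > -β, α > 0, u > max(β,0), and let (R_n) be a sequence of real numbers with R_n ≥ u for all n. Define Λ_n = α·Γ(c+1)·Γ(c+β+∑_{i=1}^n R_i)/(Γ(c+β)·Γ(c+1+∑_{i=1}^n R_i)). Then there exists a constant D (depending only on α, β, c, u) such that Λ_n ≤ D/n^(1-β) for all n ≥ 1. -/
open Real Finset

/-!
Write `x = c + ∑ R_i`, so that `Λ_n` is a constant times `Γ(x + β) / Γ(x + 1)`. Choosing `k : ℕ`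
with `β + k ∈ [0, 1]`, the functional equation and log-convexity of `Γ` (Wendel's inequality
`Γ(x + s) ≤ Γ(x) x^s` for `s ∈ [0, 1]`) give `Γ(x + β) / Γ(x + 1) ≤ x^(β + k - 1) / (x + β)^k`.
Since `x ≥ n · min(u, c + u)` and `x + β ≥ n u`, the right-hand side is `O(n^(β - 1))`.
-/

lemma Gamma_add_le_Gamma_mul_rpow {x s : ℝ} (hx : 0 < x) (hs₀ : 0 ≤ s) (hs₁ : s ≤ 1) :
    Gamma (x + s) ≤ Gamma x * x ^ s := by
  have hΓx := Gamma_pos_of_pos hx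
  have hconv := convexOn_log_Gamma.2 (Set.mem_Ioi.2 (by linarith : (0 : ℝ) < x + 1))
    (Set.mem_Ioi.2 hx) hs₀ (by linarith : 0 ≤ 1 - s) (by ring)
  simp only [Function.comp, smul_eq_mul, Gamma_add_one hx.ne', log_mul hx.ne' hΓx.ne'] at hconv
  rw [show s * (x + 1) + (1 - s) * x = x + s by ring] at hconv
  rw [← log_le_log_iff (Gamma_pos_of_pos (by linarith)) (mul_pos hΓx (rpow_pos_of_pos hx s)),
    log_mul hΓx.ne' (rpow_pos_of_pos hx s).ne', log_rpow hx]
  linarith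

lemma Gamma_add_mul_pow_le (k : ℕ) {x β : ℝ} (hx : 0 < x) (hxβ : 0 < x + β) (hk₀ : 0 ≤ β + k)
    (hk₁ : β + k ≤ 1) : Gamma (x + β) * (x + β) ^ k ≤ Gamma x * x ^ (β + k) := by
  induction k generalizing β with
  | zero => simpa using Gamma_add_le_Gamma_mul_rpow hx (by simpa using hk₀) (by simpa using hk₁)
  | succ k ih =>
    push_cast at hk₀ hk₁ ⊢
    have hshift := ih (β := β + 1) (by linarith) (by linarith) (by linarith)
    rw [← add_assoc, Gamma_add_one hxβ.ne'] at hshift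
    calc Gamma (x + β) * (x + β) ^ (k + 1)
        = (x + β) * Gamma (x + β) * (x + β) ^ k := by ring
      _ ≤ (x + β) * Gamma (x + β) * (x + β + 1) ^ k :=
          mul_le_mul_of_nonneg_left (pow_le_pow_left₀ hxβ.le (by linarith) k)
            (mul_pos hxβ (Gamma_pos_of_pos hxβ)).le
      _ ≤ Gamma x * x ^ (β + (k + 1)) := by convert hshift using 3; ring

lemma Gamma_add_div_Gamma_add_one_le {k : ℕ} {x β a b t : ℝ} (hk₀ : 0 ≤ β + k) (hk₁ : β + k ≤ 1)
    (ha : 0 < a) (hb : 0 < b) (ht : 0 < t) (hx : t * a ≤ x) (hxβ : t * b ≤ x + β) :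
    Gamma (x + β) / Gamma (x + 1) ≤ a ^ (β + k - 1) / b ^ k * t ^ (β - 1) := by
  have hx₀ : 0 < x := (mul_pos ht ha).trans_le hx
  have hxβ₀ : 0 < x + β := (mul_pos ht hb).trans_le hxβ
  have hratio : Gamma (x + β) / Gamma (x + 1) ≤ x ^ (β + k - 1) / (x + β) ^ k := by
    rw [div_le_div_iff₀ (Gamma_pos_of_pos (by linarith : 0 < x + 1)) (by positivity),
      Gamma_add_one hx₀.ne', rpow_sub_one hx₀.ne']
    calc Gamma (x + β) * (x + β) ^ k ≤ Gamma x * x ^ (β + k) :=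
          Gamma_add_mul_pow_le k hx₀ hxβ₀ hk₀ hk₁
      _ = x ^ (β + k) / x * (x * Gamma x) := by field_simp
  calc Gamma (x + β) / Gamma (x + 1) ≤ x ^ (β + k - 1) / (x + β) ^ k := hratio
    _ ≤ (t * a) ^ (β + k - 1) / (t * b) ^ k := by
        gcongr ?_ / ?_
        · exact rpow_le_rpow_of_nonpos (mul_pos ht ha) hx (by linarith)
        · exact pow_le_pow_left₀ (mul_pos ht hb).le hxβ k
    _ = a ^ (β + k - 1) / b ^ k * t ^ (β - 1) := by
        rw [mul_rpow ht.le ha.le, mul_pow, ← rpow_natCast t k, show β + k - 1 = β - 1 + k by ring,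
          rpow_add ht]
        field_simp

lemma exists_nat_add_mem_Icc {β : ℝ} (hβ : β ≤ 1) : ∃ k : ℕ, 0 ≤ β + k ∧ β + k ≤ 1 := by
  refine ⟨⌈-β⌉₊, by linarith [Nat.le_ceil (-β)], ?_⟩
  rcases le_or_gt (-β) 0 with hβ₀ | hβ₀
  · simp [Nat.ceil_eq_zero.2 hβ₀, hβ]
  · linarith [Nat.ceil_lt_add_one hβ₀.le]

/-- Bound `Λ_n ≤ D / n^(1-β)` for the expected number of new dishes in the weighted IBP. -/
theorem Lambda_upper_bound (β c α u : ℝ) (hβ : β < 1) (hc : -β < c) (hα : 0 < α)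
    (hu : max β 0 < u) (R : ℕ → ℝ) (hR : ∀ n, u ≤ R n) :
    ∃ D : ℝ, ∀ n : ℕ, 1 ≤ n →
      α * Real.Gamma (c + 1) * Real.Gamma (c + β + ∑ i ∈ Finset.Icc 1 n, R i) /
        (Real.Gamma (c + β) * Real.Gamma (c + 1 + ∑ i ∈ Finset.Icc 1 n, R i)) ≤
      D / (n : ℝ) ^ (1 - β) := by
  obtain ⟨k, hk₀, hk₁⟩ := exists_nat_add_mem_Icc hβ.le
  have hu₀ : 0 < u := (le_max_right β 0).trans_lt hu
  have hm : 0 < min u (c + u) := lt_min hu₀ (by linarith [le_max_left β 0])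
  refine ⟨α * Gamma (c + 1) / Gamma (c + β) * (min u (c + u) ^ (β + k - 1) / u ^ k),
    fun n hn ↦ ?_⟩
  set S := ∑ i ∈ Icc 1 n, R i
  have hn₁ : (1 : ℝ) ≤ n := by exact_mod_cast hn
  have hS : n * u ≤ S := by simpa using card_nsmul_le_sum (Icc 1 n) R u fun i _ ↦ hR i
  have hx : n * min u (c + u) ≤ c + S := by
    rcases le_or_gt 0 c with hc₀ | hc₀
    · nlinarith [min_le_left u (c + u)]
    · nlinarith [min_le_right u (c + u)]
  have key := Gamma_add_div_Gamma_add_one_le hk₀ hk₁ hm hu₀ (by positivity) hx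
    (by linarith : n * u ≤ c + S + β)
  have hΓ : 0 ≤ α * Gamma (c + 1) / Gamma (c + β) :=
    div_nonneg (mul_nonneg hα.le (Gamma_pos_of_pos (by linarith)).le)
      (Gamma_pos_of_pos (by linarith)).le
  rw [div_eq_mul_inv _ ((n : ℝ) ^ _), ← rpow_neg (by positivity), neg_sub]
  calc α * Gamma (c + 1) * Gamma (c + β + S) / (Gamma (c + β) * Gamma (c + 1 + S))
      = α * Gamma (c + 1) / Gamma (c + β) * (Gamma (c + S + β) / Gamma (c + S + 1)) := by
        rw [add_right_comm c β, add_right_comm c 1]; ring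
    _ ≤ _ := (mul_le_mul_of_nonneg_left key hΓ).trans_eq (mul_assoc _ _ _).symm
end

section
/- With the same setup as before (β < 1, c > -β, α > 0, R_n ≥ u > max(β,0), Λ_n = α·Γ(c+1)·Γ(c+β+∑_{i=1}^n R_i)/(Γ(c+β)·Γ(c+1+∑_{i=1}^n R_i))), if additionally R_n ≤ b for all n for some constant b, then there exists a constant D with |Λ_{n+1} − Λ_n| ≤ D/n^(2-β) for all n ≥ 1. -/
open Real Finset Filter Asymptotics

/-!
Write `Λ_n = K · A(c + S_n)` with `A(x) = Γ(x+β)/Γ(x+1)` and `S_n = R_1 + ⋯ + R_n ≥ n u`.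
Log-convexity of `Γ` makes `A` antitone, and `Γ(z+1) = z Γ(z)` gives
`A(z) - A(z+1) = (1-β) A(z)/(z+1)`; telescoping over `⌈R_{n+1}⌉ ≤ b + 1` unit steps bounds
`|Λ_{n+1} - Λ_n|` by a multiple of `A(y)/y`, `y = c + S_n`. Gautschi's inequality
`A(x) = O(x^{β-1})`, again from log-convexity (and the recurrence to reach `β < 0`), turns this
into `O(y^{β-2}) = O(n^{β-2})`.
-/

theorem Real.Gamma_mul_add_mul_le_rpow_Gamma_mul_rpow_Gamma_of_nonneg {s t a b : ℝ}
    (hs : 0 < s) (ht : 0 < t) (ha : 0 ≤ a) (hb : 0 ≤ b) (hab : a + b = 1) :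
    Gamma (a * s + b * t) ≤ Gamma s ^ a * Gamma t ^ b := by
  rcases ha.eq_or_lt with rfl | ha
  · obtain rfl : b = 1 := by linarith
    simp
  rcases hb.eq_or_lt with rfl | hb
  · obtain rfl : a = 1 := by linarith
    simp
  exact Gamma_mul_add_mul_le_rpow_Gamma_mul_rpow_Gamma hs ht ha hb hab

theorem Real.Gamma_mul_Gamma_le_of_add_eq {p q r t : ℝ} (hp : 0 < p) (hpq : p ≤ q) (hpr : p ≤ r)
    (hsum : q + r = p + t) : Gamma q * Gamma r ≤ Gamma p * Gamma t := by
  rcases (hpq.trans (by linarith : q ≤ t)).eq_or_lt with hpt | hpt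
  · obtain rfl : q = p := by linarith
    obtain rfl : r = t := by linarith
    rfl
  -- `q` and `r` are the convex combinations of `p` and `t` with weights `(λ, 1-λ)` and `(1-λ, λ)`
  set lam := (t - q) / (t - p)
  have hlam0 : 0 ≤ lam := div_nonneg (by linarith) (by linarith)
  have hlam1 : lam ≤ 1 := div_le_one_of_le₀ (by linarith) (by linarith)
  have hq : lam * p + (1 - lam) * t = q := by
    simp only [lam]; field_simp; ring
  have hr : (1 - lam) * p + lam * t = r := by linear_combination -hq - hsum
  have ht : 0 < t := hp.trans hpt
  have hΓp := Gamma_pos_of_pos hp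
  have hΓt := Gamma_pos_of_pos ht
  calc Gamma q * Gamma r
      ≤ (Gamma p ^ lam * Gamma t ^ (1 - lam)) * (Gamma p ^ (1 - lam) * Gamma t ^ lam) := by
        rw [← hq, ← hr]
        gcongr
        · exact Gamma_mul_add_mul_le_rpow_Gamma_mul_rpow_Gamma_of_nonneg hp ht
            hlam0 (by linarith) (by ring)
        · exact Gamma_mul_add_mul_le_rpow_Gamma_mul_rpow_Gamma_of_nonneg hp ht
            (by linarith) hlam0 (by ring)
    _ = Gamma p * Gamma t := by
        rw [mul_mul_mul_comm, ← rpow_add hΓp, ← rpow_add hΓt, add_sub_cancel, sub_add_cancel,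
          rpow_one, rpow_one]

noncomputable def gammaRatio (β x : ℝ) : ℝ := Gamma (x + β) / Gamma (x + 1)

section gammaRatio

variable {β x : ℝ}

theorem gammaRatio_pos (hβ : β ≤ 1) (hx : 0 < x + β) : 0 < gammaRatio β x :=
  div_pos (Gamma_pos_of_pos hx) (Gamma_pos_of_pos (by linarith))

theorem gammaRatio_le_gammaRatio {x' : ℝ} (hβ : β ≤ 1) (hx : 0 < x + β) (hxx' : x ≤ x') :
    gammaRatio β x' ≤ gammaRatio β x := by
  rw [gammaRatio, gammaRatio, div_le_div_iff₀ (Gamma_pos_of_pos (by linarith))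
    (Gamma_pos_of_pos (by linarith))]
  exact Gamma_mul_Gamma_le_of_add_eq hx (by linarith) (by linarith) (by ring)

theorem gammaRatio_sub_gammaRatio_add_one (hx : 0 < x + β) (hx1 : 0 < x + 1) :
    gammaRatio β x - gammaRatio β (x + 1) = (1 - β) * gammaRatio β x / (x + 1) := by
  have := (Gamma_pos_of_pos hx1).ne'
  rw [gammaRatio, gammaRatio, add_right_comm, Gamma_add_one hx.ne', Gamma_add_one hx1.ne']
  field_simp
  ring

theorem gammaRatio_sub_gammaRatio_add_nat_le (hβ : β ≤ 1) (hx : 0 < x) (hxβ : 0 < x + β)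
    (m : ℕ) : gammaRatio β x - gammaRatio β (x + m) ≤ m * ((1 - β) * gammaRatio β x / x) := by
  have hstep (k : ℕ) : gammaRatio β (x + k) - gammaRatio β (x + (k + 1 : ℕ))
      ≤ (1 - β) * gammaRatio β x / x := by
    have hk : (0 : ℝ) ≤ k := k.cast_nonneg
    rw [Nat.cast_succ, ← add_assoc, gammaRatio_sub_gammaRatio_add_one (by linarith) (by linarith)]
    exact div_le_div₀ (mul_nonneg (by linarith) (gammaRatio_pos hβ hxβ).le)
      (mul_le_mul_of_nonneg_left (gammaRatio_le_gammaRatio hβ hxβ (by linarith)) (by linarith))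
      hx (by linarith)
  calc gammaRatio β x - gammaRatio β (x + m)
      = ∑ k ∈ range m, (gammaRatio β (x + k) - gammaRatio β (x + (k + 1 : ℕ))) := by
        rw [sum_range_sub' (fun k : ℕ => gammaRatio β (x + k))]
        simp
    _ ≤ ∑ _k ∈ range m, (1 - β) * gammaRatio β x / x := sum_le_sum fun k _ => hstep k
    _ = m * ((1 - β) * gammaRatio β x / x) := by simp

theorem gammaRatio_sub_gammaRatio_add_le (hβ : β ≤ 1) (hx : 0 < x) (hxβ : 0 < x + β) {r : ℝ}
    (hr : 0 ≤ r) :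
    gammaRatio β x - gammaRatio β (x + r) ≤ (r + 1) * ((1 - β) * gammaRatio β x / x) := by
  have hA := gammaRatio_pos hβ hxβ
  calc gammaRatio β x - gammaRatio β (x + r)
      ≤ gammaRatio β x - gammaRatio β (x + ⌈r⌉₊) := by
        gcongr
        exact gammaRatio_le_gammaRatio hβ (by linarith) (by gcongr; exact Nat.le_ceil r)
    _ ≤ ⌈r⌉₊ * ((1 - β) * gammaRatio β x / x) := gammaRatio_sub_gammaRatio_add_nat_le hβ hx hxβ _
    _ ≤ (r + 1) * ((1 - β) * gammaRatio β x / x) := by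
        exact mul_le_mul_of_nonneg_right (Nat.ceil_lt_add_one hr).le
          (div_nonneg (mul_nonneg (by linarith) hA.le) hx.le)

theorem gammaRatio_le_rpow (hβ0 : 0 ≤ β) (hβ1 : β ≤ 1) (hx : 0 < x) :
    gammaRatio β x ≤ x ^ (β - 1) := by
  have hΓ := Gamma_pos_of_pos hx
  have hconv : Gamma (x + β) ≤ Gamma (x + 1) ^ β * Gamma x ^ (1 - β) := by
    convert Gamma_mul_add_mul_le_rpow_Gamma_mul_rpow_Gamma_of_nonneg (s := x + 1) (by linarith)
      hx hβ0 (by linarith) (add_sub_cancel β 1) using 2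
    ring
  rw [gammaRatio, div_le_iff₀ (Gamma_pos_of_pos (by linarith))]
  calc Gamma (x + β) ≤ Gamma (x + 1) ^ β * Gamma x ^ (1 - β) := hconv
    _ = x ^ (β - 1) * Gamma (x + 1) := by
        rw [Gamma_add_one hx.ne', mul_rpow hx.le hΓ.le, mul_assoc, ← rpow_add hΓ,
          add_sub_cancel, rpow_one, rpow_sub_one hx.ne']
        field_simp

theorem gammaRatio_add_one_left (hx : x + β ≠ 0) :
    gammaRatio (β + 1) x = (x + β) * gammaRatio β x := by
  rw [gammaRatio, gammaRatio, ← add_assoc, Gamma_add_one hx, mul_div_assoc]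

end gammaRatio

theorem isBigO_add_const_inv (a : ℝ) : (fun x : ℝ => (x + a)⁻¹) =O[atTop] fun x => x⁻¹ :=
  (isLittleO_const_id_atTop a).right_isBigO_add'.inv_rev <|
    (eventually_ne_atTop 0).mono fun _ hx h => absurd h hx

theorem rpow_mul_inv_eventuallyEq (s : ℝ) :
    (fun x : ℝ => x ^ s * x⁻¹) =ᶠ[atTop] fun x => x ^ (s - 1) :=
  (eventually_gt_atTop 0).mono fun x hx => by
    simp only [rpow_sub_one hx.ne', div_eq_mul_inv]

theorem gammaRatio_isBigO_rpow_of_nonneg {β : ℝ} (hβ0 : 0 ≤ β) (hβ1 : β ≤ 1) :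
    gammaRatio β =O[atTop] fun x => x ^ (β - 1) :=
  IsBigO.of_bound 1 <| (eventually_gt_atTop 0).mono fun x hx => by
    rw [one_mul, norm_of_nonneg (gammaRatio_pos hβ1 (by linarith)).le,
      norm_of_nonneg (rpow_nonneg hx.le _)]
    exact gammaRatio_le_rpow hβ0 hβ1 hx

theorem gammaRatio_isBigO_rpow {β : ℝ} (hβ : β ≤ 1) :
    gammaRatio β =O[atTop] fun x => x ^ (β - 1) := by
  suffices ∀ m : ℕ, ∀ β : ℝ, -m ≤ β → β ≤ 1 → gammaRatio β =O[atTop] fun x => x ^ (β - 1) from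
    this ⌈-β⌉₊ β (neg_le.mp (Nat.le_ceil _)) hβ
  intro m
  induction m with
  | zero => exact fun β h0 h1 => gammaRatio_isBigO_rpow_of_nonneg (by simpa using h0) h1
  | succ m ih =>
    intro β hm h1
    rcases le_or_gt 0 β with h0 | h0
    · exact gammaRatio_isBigO_rpow_of_nonneg h0 h1
    refine ((ih (β + 1) (by push_cast at hm; linarith) (by linarith)).mul
      (isBigO_add_const_inv β)).congr' ?_ ?_
    · filter_upwards [eventually_gt_atTop (-β)] with x hx
      rw [gammaRatio_add_one_left (by linarith), ← div_eq_mul_inv,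
        mul_div_cancel_left₀ _ (by linarith)]
    · simpa using rpow_mul_inv_eventuallyEq β

theorem gammaRatio_div_isBigO_rpow {β : ℝ} (hβ : β ≤ 1) :
    (fun x => gammaRatio β x / x) =O[atTop] fun x => x ^ (β - 2) := by
  refine ((gammaRatio_isBigO_rpow hβ).mul (isBigO_refl (fun x : ℝ => x⁻¹) atTop)).congr'
    (.of_forall fun _ => (div_eq_mul_inv _ _).symm) ?_
  simpa only [sub_sub, one_add_one_eq_two] using rpow_mul_inv_eventuallyEq (β - 1)

theorem Asymptotics.IsBigO.comp_of_affine_le {f : ℝ → ℝ} {s c u : ℝ}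
    (hf : f =O[atTop] fun x => x ^ s) (hs : s ≤ 0) (hu : 0 < u) {y : ℕ → ℝ}
    (hy : ∀ n, c + n * u ≤ y n) :
    (fun n => f (y n)) =O[atTop] fun n : ℕ => (n : ℝ) ^ s := by
  have hlin : ∀ᶠ n : ℕ in atTop, u / 2 * n ≤ y n ∧ 0 < u / 2 * n := by
    filter_upwards [(tendsto_natCast_atTop_atTop.const_mul_atTop (half_pos hu)).eventually_ge_atTop
      (-c), eventually_gt_atTop 0] with n hn hn0
    have : (0 : ℝ) < n := by exact_mod_cast hn0
    exact ⟨by linarith [hy n], by positivity⟩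
  have hy_tendsto : Tendsto y atTop atTop :=
    tendsto_atTop_mono' atTop (hlin.mono fun _ h => h.1)
      (tendsto_natCast_atTop_atTop.const_mul_atTop (half_pos hu))
  refine (hf.comp_tendsto hy_tendsto).trans (IsBigO.of_bound ((u / 2) ^ s) ?_)
  filter_upwards [hlin] with n ⟨hle, hpos⟩
  rw [Function.comp_apply, norm_of_nonneg (rpow_nonneg (hpos.trans_le hle).le _),
    norm_of_nonneg (rpow_nonneg n.cast_nonneg _), ← mul_rpow (by linarith) n.cast_nonneg]
  exact rpow_le_rpow_of_nonpos hpos hle hs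

theorem gammaRatio_increment_isBigO {β c u b : ℝ} (hβ : β ≤ 1) (hu : 0 < u) {y : ℕ → ℝ}
    (hy : ∀ n, c + n * u ≤ y n) (hy_mono : Monotone y) (hy_step : ∀ n, y (n + 1) ≤ y n + b) :
    (fun n => gammaRatio β (y (n + 1)) - gammaRatio β (y n)) =O[atTop]
      fun n : ℕ => (n : ℝ) ^ (β - 2) := by
  have hy_tendsto : Tendsto y atTop atTop :=
    tendsto_atTop_mono hy <| tendsto_atTop_add_const_left _ c <|
      tendsto_natCast_atTop_atTop.atTop_mul_const hu
  refine IsBigO.trans ?_ ((gammaRatio_div_isBigO_rpow hβ).comp_of_affine_le (by linarith) hu hy)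
  refine IsBigO.of_bound ((b + 1) * (1 - β)) ?_
  filter_upwards [hy_tendsto.eventually_gt_atTop (max 0 (-β))] with n hn
  have hx : 0 < y n := (le_max_left _ _).trans_lt hn
  have hxβ : 0 < y n + β := by linarith [(le_max_right 0 (-β)).trans_lt hn]
  have hr : 0 ≤ y (n + 1) - y n := sub_nonneg.2 (hy_mono n.le_succ)
  have hA := gammaRatio_pos hβ hxβ
  have h := gammaRatio_sub_gammaRatio_add_le hβ hx hxβ hr
  rw [add_sub_cancel] at h
  rw [norm_sub_rev, norm_of_nonneg (sub_nonneg.2 (gammaRatio_le_gammaRatio hβ hxβ (by linarith))),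
    norm_of_nonneg (div_nonneg hA.le hx.le)]
  calc _ ≤ _ := h
    _ ≤ (b + 1) * (1 - β) * (gammaRatio β (y n) / y n) := by
        rw [mul_assoc, mul_div_assoc]
        exact mul_le_mul_of_nonneg_right (by linarith [hy_step n])
          (mul_nonneg (by linarith) (div_nonneg hA.le hx.le))

theorem Lambda_increment_bound_general (β c α u b : ℝ) (hβ : β < 1)
    (hu : max β 0 < u) (R : ℕ → ℝ) (hR : ∀ n, u ≤ R n) (hRb : ∀ n, R n ≤ b) :
    ∃ D : ℝ, ∀ n : ℕ, 1 ≤ n →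
      |α * Real.Gamma (c + 1) * Real.Gamma (c + β + ∑ i ∈ Finset.Icc 1 (n + 1), R i) /
          (Real.Gamma (c + β) * Real.Gamma (c + 1 + ∑ i ∈ Finset.Icc 1 (n + 1), R i)) -
        α * Real.Gamma (c + 1) * Real.Gamma (c + β + ∑ i ∈ Finset.Icc 1 n, R i) /
          (Real.Gamma (c + β) * Real.Gamma (c + 1 + ∑ i ∈ Finset.Icc 1 n, R i))| ≤
      D / (n : ℝ) ^ (2 - β) := by
  have hu0 : 0 < u := (le_max_right β 0).trans_lt hu
  set K := α * Gamma (c + 1) / Gamma (c + β)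
  set y : ℕ → ℝ := fun n => c + ∑ i ∈ Icc 1 n, R i
  have hΛ (s : ℝ) : α * Gamma (c + 1) * Gamma (c + β + s) / (Gamma (c + β) * Gamma (c + 1 + s))
      = K * gammaRatio β (c + s) := by
    rw [gammaRatio, add_right_comm c s, add_right_comm c s, mul_div_mul_comm]
  have hy (n : ℕ) : c + n * u ≤ y n := by
    have := card_nsmul_le_sum (Icc 1 n) R u fun i _ => hR i
    simp only [Nat.card_Icc, add_tsub_cancel_right, nsmul_eq_mul] at this
    linarith
  have hy_succ (n : ℕ) : y (n + 1) = y n + R (n + 1) := by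
    simp only [y, sum_Icc_succ_top (Nat.le_add_left 1 n), add_assoc]
  have hO := (gammaRatio_increment_isBigO (b := b) hβ.le hu0 hy
    (monotone_nat_of_le_succ fun n => by linarith [hy_succ n, hR (n + 1)])
    fun n => by linarith [hy_succ n, hRb (n + 1)]).const_mul_left K
  obtain ⟨D, -, hD⟩ := bound_of_isBigO_nat_atTop hO
  refine ⟨D, fun n hn => ?_⟩
  have hn0 : (0 : ℝ) < n := by exact_mod_cast hn
  have h := hD (rpow_pos_of_pos hn0 (β - 2)).ne'
  rw [hΛ, hΛ, ← mul_sub]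
  rwa [norm_of_nonneg (rpow_pos_of_pos hn0 _).le, show β - 2 = -(2 - β) by ring,
    rpow_neg hn0.le, ← div_eq_mul_inv] at h

/-- Increment bound `|Λ_{n+1} − Λ_n| ≤ D / n^(2-β)` in the weighted IBP. -/
theorem Lambda_increment_bound (β c α u b : ℝ) (hβ : β < 1) (hc : -β < c) (hα : 0 < α)
    (hu : max β 0 < u) (R : ℕ → ℝ) (hR : ∀ n, u ≤ R n) (hRb : ∀ n, R n ≤ b) :
    ∃ D : ℝ, ∀ n : ℕ, 1 ≤ n →
      |α * Real.Gamma (c + 1) * Real.Gamma (c + β + ∑ i ∈ Finset.Icc 1 (n + 1), R i) /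
          (Real.Gamma (c + β) * Real.Gamma (c + 1 + ∑ i ∈ Finset.Icc 1 (n + 1), R i)) -
        α * Real.Gamma (c + 1) * Real.Gamma (c + β + ∑ i ∈ Finset.Icc 1 n, R i) /
          (Real.Gamma (c + β) * Real.Gamma (c + 1 + ∑ i ∈ Finset.Icc 1 n, R i))| ≤
      D / (n : ℝ) ^ (2 - β) :=
  Lambda_increment_bound_general β c α u b hβ hu R hR hRb
end

section
/- Let u > 0, β ∈ [0,1), c ∈ ℝ, and let (R_i) be random variables with R_i ≥ u and c + ∑_{i=1}^j R_i ≥ v·j for all j, where v = min(u, c+u) > 0. If r ≥ u is a constant, then for every j ≥ 1: E| (rj)^{β-1} − (c + ∑_{i=1}^j R_i)^{β-1} | ≤ ((1-β)/v^{2-β}) · ( |c|/j^{2-β} + E|R̄_j − r| / j^{1-β} ), where R̄_j = (1/j)∑_{i=1}^j R_i. -/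
open MeasureTheory Finset

/-! Both `r j` and `c + ∑ R_i` are at least `v j`, and on `[v j, ∞)` the derivative of
`t ↦ t ^ (β - 1)` is at most `(1 - β) (v j) ^ (β - 2)` in absolute value. The mean value
inequality and `r j - c - ∑ R_i = -c - j (R̄_j - r)` give a pointwise bound, which is then
integrated. -/

theorem abs_rpow_sub_rpow_le {p m x y : ℝ} (hp : p ≤ 1) (hm : 0 < m) (hx : m ≤ x) (hy : m ≤ y) :
    |x ^ p - y ^ p| ≤ |p| * m ^ (p - 1) * |x - y| := by
  have hderiv : ∀ t ∈ Set.Ici m,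
      HasDerivWithinAt (fun s : ℝ => s ^ p) (p * t ^ (p - 1)) (Set.Ici m) t := fun t ht =>
    (Real.hasDerivAt_rpow_const (Or.inl (hm.trans_le ht).ne')).hasDerivWithinAt
  have hbound : ∀ t ∈ Set.Ici m, ‖p * t ^ (p - 1)‖ ≤ |p| * m ^ (p - 1) := fun t ht => by
    have ht0 : 0 < t := hm.trans_le ht
    rw [norm_mul, Real.norm_eq_abs, Real.norm_eq_abs, abs_of_nonneg (Real.rpow_nonneg ht0.le _)]
    exact mul_le_mul_of_nonneg_left
      (Real.rpow_le_rpow_of_nonpos hm ht (by linarith)) (abs_nonneg p)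
  simpa only [Real.norm_eq_abs] using Convex.norm_image_sub_le_of_norm_hasDerivWithin_le
    hderiv hbound (convex_Ici m) (Set.mem_Ici.2 hy) (Set.mem_Ici.2 hx)

theorem abs_sub_add_le_abs_add_mul_abs_div_sub {r n c s : ℝ} (hn : 0 < n) :
    |r * n - (c + s)| ≤ |c| + n * |s / n - r| := by
  have hsplit : r * n - (c + s) = -c - n * (s / n - r) := by field_simp; ring
  calc |r * n - (c + s)| ≤ |-c| + |n * (s / n - r)| := hsplit ▸ abs_sub _ _
    _ = |c| + n * |s / n - r| := by rw [abs_neg, abs_mul, abs_of_pos hn]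

theorem abs_rpow_sub_rpow_le_of_mean {β v c r s n : ℝ} (hβ : β < 1) (hv : 0 < v) (hn : 0 < n)
    (hvr : v ≤ r) (hs : v * n ≤ c + s) :
    |(r * n) ^ (β - 1) - (c + s) ^ (β - 1)| ≤
      (1 - β) / v ^ (2 - β) * (|c| / n ^ (2 - β) + |s / n - r| / n ^ (1 - β)) := by
  have hvn : 0 < v * n := mul_pos hv hn
  have hrn : v * n ≤ r * n := mul_le_mul_of_nonneg_right hvr hn.le
  have hmvt := abs_rpow_sub_rpow_le (p := β - 1) (by linarith) hvn hrn hs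
  have hpow : (v * n) ^ (β - 1 - 1) = (v ^ (2 - β))⁻¹ * (n * n ^ (1 - β))⁻¹ := by
    rw [Real.mul_rpow hv.le hn.le, show β - 1 - 1 = -(2 - β) by ring,
      Real.rpow_neg hv.le, Real.rpow_neg hn.le, show (2 : ℝ) - β = 1 + (1 - β) by ring,
      Real.rpow_add hn, Real.rpow_one]
  have hn1 : 0 < n ^ (1 - β) := Real.rpow_pos_of_pos hn _
  calc |(r * n) ^ (β - 1) - (c + s) ^ (β - 1)|
      ≤ (1 - β) * (v * n) ^ (β - 1 - 1) * (|c| + n * |s / n - r|) := by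
        rw [abs_of_neg (by linarith : β - 1 < 0), neg_sub] at hmvt
        exact hmvt.trans (mul_le_mul_of_nonneg_left (abs_sub_add_le_abs_add_mul_abs_div_sub hn)
          (mul_nonneg (by linarith) (Real.rpow_nonneg hvn.le _)))
    _ = (1 - β) / v ^ (2 - β) * (|c| / n ^ (2 - β) + |s / n - r| / n ^ (1 - β)) := by
        rw [hpow, show (2 : ℝ) - β = 1 + (1 - β) by ring, Real.rpow_add hn, Real.rpow_one]
        field_simp

theorem rpow_moment_bound_general
    {Ω : Type*} {mΩ : MeasurableSpace Ω} (μ : Measure Ω) [IsProbabilityMeasure μ]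
    (β u c r v : ℝ) (hβ1 : β < 1)
    (hv : v = min u (c + u)) (hvpos : 0 < v) (hr : u ≤ r)
    (R : ℕ → Ω → ℝ) (hint : ∀ i, Integrable (R i) μ)
    (hlow : ∀ j : ℕ, 1 ≤ j → ∀ ω, v * j ≤ c + ∑ i ∈ Finset.Icc 1 j, R i ω)
    (j : ℕ) (hj : 1 ≤ j) :
    ∫ ω, |(r * j) ^ (β - 1) - (c + ∑ i ∈ Finset.Icc 1 j, R i ω) ^ (β - 1)| ∂μ ≤
      ((1 - β) / v ^ (2 - β)) *
        (|c| / (j : ℝ) ^ (2 - β) +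
          (∫ ω, |(∑ i ∈ Finset.Icc 1 j, R i ω) / j - r| ∂μ) / (j : ℝ) ^ (1 - β)) := by
  have hjpos : (0 : ℝ) < j := by exact_mod_cast hj
  have hvr : v ≤ r := (hv ▸ min_le_left _ _ : v ≤ u).trans hr
  have hdev : Integrable (fun ω => |(∑ i ∈ Finset.Icc 1 j, R i ω) / j - r|) μ :=
    ((integrable_finsetSum _ fun i _ => hint i).div_const _ |>.sub (integrable_const r)).abs
  calc _ ≤ ∫ ω, (1 - β) / v ^ (2 - β) * (|c| / (j : ℝ) ^ (2 - β) +
          |(∑ i ∈ Finset.Icc 1 j, R i ω) / j - r| / (j : ℝ) ^ (1 - β)) ∂μ :=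
        integral_mono_of_nonneg (.of_forall fun _ => abs_nonneg _)
          (((integrable_const _).add (hdev.div_const _)).const_mul _)
          (.of_forall fun ω => abs_rpow_sub_rpow_le_of_mean hβ1 hvpos hjpos hvr (hlow j hj ω))
    _ = _ := by
        rw [integral_const_mul, integral_add (integrable_const _) (hdev.div_const _),
          integral_const, integral_div]
        simp

/-- Moment bound: `E|(rj)^{β-1} − (c + ∑_{i≤j} R_i)^{β-1}|
  ≤ ((1-β)/v^{2-β}) (|c|/j^{2-β} + E|R̄_j − r|/j^{1-β})`. -/
theorem rpow_moment_bound
    {Ω : Type*} {mΩ : MeasurableSpace Ω} (μ : Measure Ω) [IsProbabilityMeasure μ]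
    (β u c r v : ℝ) (hβ0 : 0 ≤ β) (hβ1 : β < 1) (hu : 0 < u)
    (hv : v = min u (c + u)) (hvpos : 0 < v) (hr : u ≤ r)
    (R : ℕ → Ω → ℝ) (hmeas : ∀ i, Measurable (R i)) (hint : ∀ i, Integrable (R i) μ)
    (hRu : ∀ i ω, u ≤ R i ω)
    (hlow : ∀ j : ℕ, 1 ≤ j → ∀ ω, v * j ≤ c + ∑ i ∈ Finset.Icc 1 j, R i ω)
    (j : ℕ) (hj : 1 ≤ j) :
    ∫ ω, |(r * j) ^ (β - 1) - (c + ∑ i ∈ Finset.Icc 1 j, R i ω) ^ (β - 1)| ∂μ ≤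
      ((1 - β) / v ^ (2 - β)) *
        (|c| / (j : ℝ) ^ (2 - β) +
          (∫ ω, |(∑ i ∈ Finset.Icc 1 j, R i ω) / j - r| ∂μ) / (j : ℝ) ^ (1 - β)) :=
  rpow_moment_bound_general (mΩ := mΩ) μ β u c r v hβ1 hv hvpos hr R hint hlow j hj
end

section
/- Suppose a sequence of nonnegative random variables W_n satisfies, for some constants t ∈ (0, 1/2], D* > 0 and n₀ ≥ 1 with ∏_{j≥n₀}(1 + D*/j²) ≤ 2: E(e^{t·W_{n+1}}) ≤ exp(D*·t/n^{2-β})·E(exp(t·W_n·(1 + D*/n²))) for all n ≥ n₀, where β < 1, and E(e^{2t·W_{n₀}}) < ∞. Then sup_n E(e^{t·W_n}) ≤ exp(∑_{j≥n₀} 2D*·t/j^{2-β})·E(e^{2t·W_{n₀}}) < ∞. -/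
/-!
Iterating the recursion `n` times from `n₀` turns the exponent `s` into
`s ∏_{n₀ ≤ j < n₀ + n} (1 + D*/j²) ≤ 2s`, so starting from `s = t` every intermediate exponent
stays in `[t, 2t]`, where the recursion is available. The prefactors `exp(D* s/j^{2-β})` are then
at most `exp(2 D* t/j^{2-β})`, and their product is bounded by the exponential of the convergent
series `∑_j 2 D* t/j^{2-β}`. Finally `s ↦ E e^{s W}` is monotone for `W ≥ 0`, so the moment of
`W_{n₀}` reached at the end is at most `E e^{2t W_{n₀}}`.
-/

open MeasureTheory Filter ENNReal Finset

theorem Real.prod_le_tprod_of_one_le {ι : Type*} {f : ι → ℝ} (hf : ∀ i, 1 ≤ f i)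
    (hm : Multipliable f) (s : Finset ι) : ∏ i ∈ s, f i ≤ ∏' i, f i :=
  ge_of_tendsto hm.hasProd <| eventually_atTop.2
    ⟨s, fun _ hst ↦ prod_mono_set_of_one_le hf hst⟩

def Nat.addLeftSubtype (n₀ : ℕ) : ℕ ↪ {j : ℕ // n₀ ≤ j} :=
  ⟨fun k ↦ ⟨n₀ + k, Nat.le_add_right n₀ k⟩, fun _ _ h ↦ by simpa using congrArg Subtype.val h⟩

theorem sum_range_add_le_tsum_subtype {f : ℕ → ℝ} (hf : ∀ j, 0 ≤ f j) (hs : Summable f)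
    (n₀ n : ℕ) : ∑ k ∈ range n, f (n₀ + k) ≤ ∑' j : {j : ℕ // n₀ ≤ j}, f j := by
  calc ∑ k ∈ range n, f (n₀ + k) = ∑ j ∈ (range n).map (Nat.addLeftSubtype n₀), f j :=
        (sum_map (range n) (Nat.addLeftSubtype n₀) fun j ↦ f j).symm
    _ ≤ _ := (hs.subtype _).sum_le_tsum _ (fun j _ ↦ hf j)

theorem prod_range_add_one_add_le_tprod_subtype {f : ℕ → ℝ} (hf : ∀ j, 0 ≤ f j)
    (hs : Summable f) (n₀ n : ℕ) :
    ∏ k ∈ range n, (1 + f (n₀ + k)) ≤ ∏' j : {j : ℕ // n₀ ≤ j}, (1 + f j) := by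
  calc ∏ k ∈ range n, (1 + f (n₀ + k))
      = ∏ j ∈ (range n).map (Nat.addLeftSubtype n₀), (1 + f j) :=
        (prod_map (range n) (Nat.addLeftSubtype n₀) fun j ↦ 1 + f j).symm
    _ ≤ _ := Real.prod_le_tprod_of_one_le (f := fun j : {j : ℕ // n₀ ≤ j} ↦ 1 + f j)
        (fun j ↦ le_add_of_nonneg_right (hf j))
        (Real.multipliable_one_add_of_summable (hs.subtype {j | n₀ ≤ j})) _

theorem le_prod_mul_of_le_mul_shift (F : ℕ → ℝ → ℝ≥0∞) (a : ℕ → ℝ) (C : ℕ → ℝ≥0∞)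
    {t T : ℝ} (ht : 0 ≤ t) (ha : ∀ n, 1 ≤ a n) (n₀ : ℕ)
    (hstep : ∀ s, t ≤ s → s ≤ T → ∀ n, n₀ ≤ n → F (n + 1) s ≤ C n * F n (s * a n)) :
    ∀ n s, t ≤ s → s * ∏ k ∈ range n, a (n₀ + k) ≤ T →
      F (n₀ + n) s ≤ (∏ k ∈ range n, C (n₀ + k)) * F n₀ (s * ∏ k ∈ range n, a (n₀ + k)) := by
  intro n
  induction n with
  | zero => simp
  | succ n ih =>
    intro s hts hsT
    rw [prod_range_succ] at hsT
    have hs : 0 ≤ s := ht.trans hts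
    have ha' : 1 ≤ (∏ k ∈ range n, a (n₀ + k)) * a (n₀ + n) :=
      one_le_mul_of_one_le_of_one_le (one_le_prod fun k _ ↦ ha _) (ha _)
    have hsT' : s ≤ T := (le_mul_of_one_le_right hs ha').trans hsT
    calc F (n₀ + (n + 1)) s ≤ C (n₀ + n) * F (n₀ + n) (s * a (n₀ + n)) :=
          hstep s hts hsT' _ (Nat.le_add_right _ _)
      _ ≤ C (n₀ + n) * ((∏ k ∈ range n, C (n₀ + k)) *
            F n₀ (s * a (n₀ + n) * ∏ k ∈ range n, a (n₀ + k))) := by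
          gcongr
          exact ih _ (hts.trans (le_mul_of_one_le_right hs (ha _))) (by linarith)
      _ = (∏ k ∈ range (n + 1), C (n₀ + k)) *
            F n₀ (s * ∏ k ∈ range (n + 1), a (n₀ + k)) := by
          rw [prod_range_succ, prod_range_succ]
          ring_nf

theorem monotone_lintegral_ofReal_exp_mul {Ω : Type*} {_ : MeasurableSpace Ω} (μ : Measure Ω)
    {X : Ω → ℝ} (hX : ∀ ω, 0 ≤ X ω) :
    Monotone fun s : ℝ ↦ ∫⁻ ω, ENNReal.ofReal (Real.exp (s * X ω)) ∂μ :=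
  fun _ _ hs ↦ lintegral_mono fun ω ↦
    ENNReal.ofReal_le_ofReal (Real.exp_le_exp.2 (mul_le_mul_of_nonneg_right hs (hX ω)))

theorem summable_const_div_nat_rpow (C : ℝ) {p : ℝ} (hp : 1 < p) :
    Summable fun j : ℕ ↦ C / (j : ℝ) ^ p :=
  ((Real.summable_nat_rpow_inv.2 hp).mul_left C).congr fun _ ↦ (div_eq_mul_inv _ _).symm

theorem uniform_exponential_moments_general
    {Ω : Type*} {mΩ : MeasurableSpace Ω} (μ : Measure Ω)
    (W : ℕ → Ω → ℝ) (hW : ∀ n ω, 0 ≤ W n ω)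
    (t Dstar β : ℝ) (ht0 : 0 < t) (hD : 0 < Dstar) (hβ : β < 1)
    (n₀ : ℕ)
    (hprod : ∏' j : {j : ℕ // n₀ ≤ j}, (1 + Dstar / (j : ℝ) ^ 2) ≤ 2)
    (hiter : ∀ s : ℝ, t ≤ s → s ≤ 2 * t → ∀ n : ℕ, n₀ ≤ n →
      ∫⁻ ω, ENNReal.ofReal (Real.exp (s * W (n + 1) ω)) ∂μ ≤
        ENNReal.ofReal (Real.exp (Dstar * s / (n : ℝ) ^ (2 - β))) *
          ∫⁻ ω, ENNReal.ofReal (Real.exp (s * (1 + Dstar / (n : ℝ) ^ 2) * W n ω)) ∂μ)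
    (hfin : (∫⁻ ω, ENNReal.ofReal (Real.exp (2 * t * W n₀ ω)) ∂μ) ≠ ⊤) :
    (⨆ n : ℕ, ∫⁻ ω, ENNReal.ofReal (Real.exp (t * W (n₀ + n) ω)) ∂μ) ≤
        ENNReal.ofReal
          (Real.exp (∑' j : {j : ℕ // n₀ ≤ j}, 2 * Dstar * t / (j : ℝ) ^ (2 - β))) *
          ∫⁻ ω, ENNReal.ofReal (Real.exp (2 * t * W n₀ ω)) ∂μ ∧
      ENNReal.ofReal
          (Real.exp (∑' j : {j : ℕ // n₀ ≤ j}, 2 * Dstar * t / (j : ℝ) ^ (2 - β))) *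
          (∫⁻ ω, ENNReal.ofReal (Real.exp (2 * t * W n₀ ω)) ∂μ) ≠ ⊤ := by
  set a : ℕ → ℝ := fun j ↦ 1 + Dstar / (j : ℝ) ^ 2
  set c : ℕ → ℝ := fun j ↦ 2 * Dstar * t / (j : ℝ) ^ (2 - β)
  set M : ℕ → ℝ → ℝ≥0∞ := fun n s ↦ ∫⁻ ω, ENNReal.ofReal (Real.exp (s * W n ω)) ∂μ
  have ha : ∀ j, 1 ≤ a j := fun j ↦ le_add_of_nonneg_right (by positivity)
  have hP : ∀ n, ∏ k ∈ range n, a (n₀ + k) ≤ 2 := by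
    have hsq : Summable fun j : ℕ ↦ Dstar / (j : ℝ) ^ (2 : ℝ) :=
      summable_const_div_nat_rpow Dstar one_lt_two
    simp only [Real.rpow_two] at hsq
    exact fun n ↦
      (prod_range_add_one_add_le_tprod_subtype (fun j ↦ by positivity) hsq n₀ n).trans hprod
  have hS : ∀ n, ∑ k ∈ range n, c (n₀ + k) ≤ ∑' j : {j : ℕ // n₀ ≤ j}, c j :=
    sum_range_add_le_tsum_subtype (fun j ↦ by positivity)
      (summable_const_div_nat_rpow _ (by linarith)) n₀
  have hstep : ∀ s, t ≤ s → s ≤ 2 * t → ∀ n, n₀ ≤ n →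
      M (n + 1) s ≤ ENNReal.ofReal (Real.exp (c n)) * M n (s * a n) := by
    intro s hts hst n hn
    refine (hiter s hts hst n hn).trans
      (mul_le_mul_left (ofReal_le_ofReal (Real.exp_le_exp.2 ?_)) _)
    show Dstar * s / _ ≤ 2 * Dstar * t / _
    gcongr ?_ / _
    nlinarith
  refine ⟨iSup_le fun n ↦ ?_, mul_ne_top ofReal_ne_top hfin⟩
  have htP : t * ∏ k ∈ range n, a (n₀ + k) ≤ 2 * t := by nlinarith [hP n]
  calc M (n₀ + n) t
      ≤ (∏ k ∈ range n, ENNReal.ofReal (Real.exp (c (n₀ + k)))) *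
          M n₀ (t * ∏ k ∈ range n, a (n₀ + k)) :=
        le_prod_mul_of_le_mul_shift M a _ ht0.le ha n₀ hstep n t le_rfl htP
    _ = ENNReal.ofReal (Real.exp (∑ k ∈ range n, c (n₀ + k))) *
          M n₀ (t * ∏ k ∈ range n, a (n₀ + k)) := by
        rw [Real.exp_sum, ofReal_prod_of_nonneg fun _ _ ↦ (Real.exp_pos _).le]
    _ ≤ _ := by
        gcongr
        · exact hS n
        · exact monotone_lintegral_ofReal_exp_mul μ (hW n₀) htP

/-- Iteration bound giving uniform exponential moments: if
`E(e^{s W_{n+1}}) ≤ exp(D* s/n^{2-β}) E(exp(s(1 + D*/n²) W_n))` for `n ≥ n₀`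
(for the relevant parameters `s ∈ [t, 2t]`), `∏_{j≥n₀}(1 + D*/j²) ≤ 2` and
`E(e^{2t W_{n₀}}) < ∞`, then
`sup_{n≥n₀} E(e^{t W_n}) ≤ exp(∑_{j≥n₀} 2 D* t/j^{2-β}) E(e^{2t W_{n₀}}) < ∞`. -/
theorem uniform_exponential_moments
    {Ω : Type*} {mΩ : MeasurableSpace Ω} (μ : Measure Ω) [IsProbabilityMeasure μ]
    (W : ℕ → Ω → ℝ) (hW : ∀ n ω, 0 ≤ W n ω) (hWmeas : ∀ n, Measurable (W n))
    (t Dstar β : ℝ) (ht0 : 0 < t) (ht : t ≤ 1 / 2) (hD : 0 < Dstar) (hβ : β < 1)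
    (n₀ : ℕ) (hn₀ : 1 ≤ n₀)
    (hprod : ∏' j : {j : ℕ // n₀ ≤ j}, (1 + Dstar / (j : ℝ) ^ 2) ≤ 2)
    (hiter : ∀ s : ℝ, t ≤ s → s ≤ 2 * t → ∀ n : ℕ, n₀ ≤ n →
      ∫⁻ ω, ENNReal.ofReal (Real.exp (s * W (n + 1) ω)) ∂μ ≤
        ENNReal.ofReal (Real.exp (Dstar * s / (n : ℝ) ^ (2 - β))) *
          ∫⁻ ω, ENNReal.ofReal (Real.exp (s * (1 + Dstar / (n : ℝ) ^ 2) * W n ω)) ∂μ)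
    (hfin : (∫⁻ ω, ENNReal.ofReal (Real.exp (2 * t * W n₀ ω)) ∂μ) ≠ ⊤) :
    (⨆ n : ℕ, ∫⁻ ω, ENNReal.ofReal (Real.exp (t * W (n₀ + n) ω)) ∂μ) ≤
        ENNReal.ofReal
          (Real.exp (∑' j : {j : ℕ // n₀ ≤ j}, 2 * Dstar * t / (j : ℝ) ^ (2 - β))) *
          ∫⁻ ω, ENNReal.ofReal (Real.exp (2 * t * W n₀ ω)) ∂μ ∧
      ENNReal.ofReal
          (Real.exp (∑' j : {j : ℕ // n₀ ≤ j}, 2 * Dstar * t / (j : ℝ) ^ (2 - β))) *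
          (∫⁻ ω, ENNReal.ofReal (Real.exp (2 * t * W n₀ ω)) ∂μ) ≠ ⊤ :=
  uniform_exponential_moments_general (mΩ := mΩ) μ W hW t Dstar β ht0 hD hβ n₀ hprod hiter hfin
end
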